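/- arXiv:2205.03351 — 3 statements merged into one kernel-verified Lean document; each statement's English description precedes it below -/
import Mathlib

section
/- The relation 'φ ~ ψ iff there exist L ≥ 1, M ≥ 0 and ŷ ∈ Y with φ(ŷ) = ψ(ŷ) = x̂ and d(φ(y), ψ(y)) ≤ L·min{d(ψ(ŷ), ψ(y)), d(ψ(ŷ), φ(y))} + M for all y ∈ Y' is an equivalence relation on the set of sections of π passing through a fixed point x̂ (i.e., it is reflexive, symmetric, and transitive). -/
theorem stmt13 {X Y : Type*} [MetricSpace X] [TopologicalSpace Y]
    (π : X → Y) (xh : X) (yh : Y) (hyh : π xh = yh) :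
    Equivalence (fun (φ ψ : {f : Y → X // (∀ y, π (f y) = y) ∧ f yh = xh}) =>
      ∃ L ≥ (1 : ℝ), ∃ M ≥ (0 : ℝ), ∀ y,
        dist (φ.1 y) (ψ.1 y) ≤
          L * min (dist (ψ.1 yh) (ψ.1 y)) (dist (ψ.1 yh) (φ.1 y)) + M) := by
  constructor
  · intro φ
    refine ⟨1, le_refl _, 0, le_refl _, fun y => ?_⟩
    simp [dist_self]
  · rintro φ ψ ⟨L, hL, M, hM, h⟩
    refine ⟨L, hL, M, hM, fun y => ?_⟩
    have := h y
    rw [φ.2.2, ψ.2.2] at *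
    rw [dist_comm (ψ.1 y) (φ.1 y), min_comm]
    exact this
  · rintro φ ψ χ ⟨L, hL, M, hM, h1⟩ ⟨L', hL', M', hM', h2⟩
    have h4 : (4:ℝ) ≤ (1 + L) * (1 + L') := by nlinarith
    have h8 : (8:ℝ) ≤ (L + L') * ((1 + L) * (1 + L')) := by
      have := mul_le_mul (show (2:ℝ) ≤ L + L' by linarith) h4 (by norm_num)
        (by linarith)
      linarith
    refine ⟨(L + L') * ((1 + L) * (1 + L')), by linarith,
      (M + M') + (L + L') * (M + M'), by nlinarith, fun y => ?_⟩
    have e1 : φ.1 yh = xh := φ.2.2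
    have e2 : ψ.1 yh = xh := ψ.2.2
    have e3 : χ.1 yh = xh := χ.2.2
    have h1 := h1 y
    have h2 := h2 y
    rw [e2] at h1
    rw [e3] at h2
    rw [e3]
    set a := dist xh (φ.1 y) with ha
    set b := dist xh (ψ.1 y) with hb
    set c := dist xh (χ.1 y) with hc
    have ha0 : 0 ≤ a := dist_nonneg
    have hb0 : 0 ≤ b := dist_nonneg
    have hc0 : 0 ≤ c := dist_nonneg
    have hmin1a : min b a ≤ a := min_le_right _ _
    have hmin1b : min b a ≤ b := min_le_left _ _
    have hmin2b : min c b ≤ b := min_le_right _ _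
    have hmin2c : min c b ≤ c := min_le_left _ _
    have t1 : b ≤ a + dist (φ.1 y) (ψ.1 y) := dist_triangle _ _ _
    have t2 : b ≤ c + dist (χ.1 y) (ψ.1 y) := dist_triangle _ _ _
    rw [dist_comm (χ.1 y)] at t2
    have t3 : dist (φ.1 y) (χ.1 y) ≤ dist (φ.1 y) (ψ.1 y) + dist (ψ.1 y) (χ.1 y) :=
      dist_triangle _ _ _
    have ba : b ≤ (1 + L) * a + M := by nlinarith
    have bc : b ≤ (1 + L') * c + M' := by nlinarith
    have key : dist (φ.1 y) (χ.1 y) ≤ (L + L') * b + (M + M') := by nlinarith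
    have hLL : (0:ℝ) ≤ L + L' := by linarith
    have hLp : (0:ℝ) ≤ L := by linarith
    have hL'p : (0:ℝ) ≤ L' := by linarith
    have hL1 : (0:ℝ) ≤ 1 + L := by linarith
    have hL'1 : (0:ℝ) ≤ 1 + L' := by linarith
    rcases le_total c a with hca | hca
    · rw [min_eq_left hca]
      nlinarith [mul_le_mul_of_nonneg_left bc hLL,
        mul_nonneg (mul_nonneg (mul_nonneg hLL hLp) hL'1) hc0,
        mul_le_mul_of_nonneg_left (show M' ≤ M + M' by linarith) hLL]
    · rw [min_eq_right hca]
      nlinarith [mul_le_mul_of_nonneg_left ba hLL,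
        mul_nonneg (mul_nonneg (mul_nonneg hLL hL'p) hL1) ha0,
        mul_le_mul_of_nonneg_left (show M ≤ M + M' by linarith) hLL]
end

section
/- Large-scale Ahlfors–David regularity transfer: let π : X → Y be a quotient map and μ a measure on Y such that for all x, x' ∈ X with π(x) = π(x') and all r > r₀, μ(π(B(x,r))) ≤ C·μ(π(B(x',r))). Let φ be an intrinsically (L,M)-quasi-isometric section of π whose image is large-scale Q-Ahlfors regular: c₁·r^Q ≤ φ_*μ(B(φ(y), r) ∩ φ(Y)) ≤ c₂·r^Q for all r > r₀. Then for every intrinsically (L,M)-quasi-isometric section ψ of π and all y ∈ Y, r > max(r₀·L + M, r₀ + M): c₁·C⁻¹·L^{−Q}·(r−M)^Q ≤ ψ_*μ(B(ψ(y), r) ∩ ψ(Y)) ≤ c₂·C·L^Q·(r+M)^Q. -/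
open Metric MeasureTheory

lemma aux_sub {X Y : Type*} [MetricSpace X] (π : X → Y) (σ : Y → X)
    (hsec : ∀ y, π (σ y) = y) (y : Y) (r : ℝ) :
    σ ⁻¹' (ball (σ y) r ∩ Set.range σ) ⊆ π '' ball (σ y) r := by
  rintro y' ⟨h1, -⟩
  exact ⟨σ y', by simpa [dist_comm] using h1, hsec y'⟩

lemma aux_sup {X Y : Type*} [MetricSpace X] (π : X → Y) (σ : Y → X)
    (L M : ℝ) (hL : 0 < L)
    (hsec : ∀ y, π (σ y) = y)
    (hqi : ∀ y₁ y₂, dist (σ y₁) (σ y₂) ≤ L * infDist (σ y₁) (π ⁻¹' {y₂}) + M)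
    (y : Y) (s : ℝ) :
    π '' ball (σ y) s ⊆ σ ⁻¹' (ball (σ y) (L * s + M) ∩ Set.range σ) := by
  rintro y' ⟨x, hx, rfl⟩
  refine ⟨?_, Set.mem_range_self _⟩
  have hinf : infDist (σ y) (π ⁻¹' {π x}) ≤ dist (σ y) x :=
    infDist_le_dist_of_mem rfl
  have h2 := hqi y (π x)
  have : dist (σ y) (σ (π x)) < L * s + M := by
    calc dist (σ y) (σ (π x)) ≤ L * infDist (σ y) (π ⁻¹' {π x}) + M := h2
    _ ≤ L * dist (σ y) x + M := by nlinarith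
    _ < L * s + M := by
        have := mem_ball.mp hx
        rw [dist_comm] at this
        nlinarith
  simpa [dist_comm] using this

theorem stmt18 {X Y : Type*} [MetricSpace X] [TopologicalSpace Y]
    [MeasurableSpace Y] (μ : Measure Y)
    (π : X → Y) (φ ψ : Y → X)
    (L M C c₁ c₂ r₀ Q : ℝ)
    (hL : 1 ≤ L) (hM : 0 ≤ M) (hC : 0 < C) (hc₁ : 0 < c₁) (hc₂ : 0 < c₂)
    (hr₀ : 0 < r₀) (hQ : 0 < Q)
    (hsecφ : ∀ y, π (φ y) = y) (hsecψ : ∀ y, π (ψ y) = y)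
    (hcomp : ∀ x x' : X, π x = π x' → ∀ r > r₀,
      μ (π '' ball x r) ≤ ENNReal.ofReal C * μ (π '' ball x' r))
    (hqiφ : ∀ y₁ y₂, dist (φ y₁) (φ y₂) ≤ L * infDist (φ y₁) (π ⁻¹' {y₂}) + M)
    (hqiψ : ∀ y₁ y₂, dist (ψ y₁) (ψ y₂) ≤ L * infDist (ψ y₁) (π ⁻¹' {y₂}) + M)
    (hAD : ∀ (y : Y), ∀ r > r₀,
      ENNReal.ofReal (c₁ * r ^ Q) ≤ μ (φ ⁻¹' (ball (φ y) r ∩ Set.range φ)) ∧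
        μ (φ ⁻¹' (ball (φ y) r ∩ Set.range φ)) ≤ ENNReal.ofReal (c₂ * r ^ Q)) :
    ∀ (y : Y), ∀ r > max (r₀ * L + M) (r₀ + M),
      ENNReal.ofReal (c₁ * C⁻¹ * L ^ (-Q) * (r - M) ^ Q) ≤
          μ (ψ ⁻¹' (ball (ψ y) r ∩ Set.range ψ)) ∧
        μ (ψ ⁻¹' (ball (ψ y) r ∩ Set.range ψ)) ≤
          ENNReal.ofReal (c₂ * C * L ^ Q * (r + M) ^ Q) := by
  intro y r hr
  have hL0 : (0:ℝ) < L := lt_of_lt_of_le one_pos hL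
  have hr1 : r₀ * L + M < r := lt_of_le_of_lt (le_max_left _ _) hr
  have hr2 : r₀ + M < r := lt_of_le_of_lt (le_max_right _ _) hr
  have hrr₀ : r₀ < r := by nlinarith
  have hrM : M < r := by nlinarith
  set s : ℝ := (r - M) / L with hs
  have hs0 : r₀ < s := by rw [hs, lt_div_iff₀ hL0]; nlinarith
  have hspos : 0 < s := lt_trans hr₀ hs0
  have hLsM : L * s + M = r := by rw [hs]; field_simp; ring
  have hπeq : π (φ y) = π (ψ y) := by rw [hsecφ, hsecψ]
  constructor
  · -- lower bound
    have h1 : ENNReal.ofReal (c₁ * s ^ Q) ≤ μ (φ ⁻¹' (ball (φ y) s ∩ Set.range φ)) :=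
      (hAD y s hs0).1
    have h2 : μ (φ ⁻¹' (ball (φ y) s ∩ Set.range φ)) ≤ μ (π '' ball (φ y) s) :=
      measure_mono (aux_sub π φ hsecφ y s)
    have h3 : μ (π '' ball (φ y) s) ≤ ENNReal.ofReal C * μ (π '' ball (ψ y) s) :=
      hcomp _ _ hπeq s hs0
    have h4 : μ (π '' ball (ψ y) s) ≤ μ (ψ ⁻¹' (ball (ψ y) r ∩ Set.range ψ)) := by
      refine measure_mono ?_
      have := aux_sup π ψ L M hL0 hsecψ hqiψ y s
      rwa [hLsM] at this
    have key : ENNReal.ofReal (c₁ * s ^ Q) ≤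
        ENNReal.ofReal C * μ (ψ ⁻¹' (ball (ψ y) r ∩ Set.range ψ)) :=
      h1.trans (h2.trans (h3.trans (mul_le_mul_right h4 _)))
    have heq : c₁ * C⁻¹ * L ^ (-Q) * (r - M) ^ Q = C⁻¹ * (c₁ * s ^ Q) := by
      rw [hs, Real.div_rpow (by linarith) hL0.le, Real.rpow_neg hL0.le]
      ring
    rw [heq, ENNReal.ofReal_mul (inv_nonneg.mpr hC.le)]
    calc ENNReal.ofReal C⁻¹ * ENNReal.ofReal (c₁ * s ^ Q)
        ≤ ENNReal.ofReal C⁻¹ * (ENNReal.ofReal C * μ (ψ ⁻¹' (ball (ψ y) r ∩ Set.range ψ))) :=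
          mul_le_mul_right key _
      _ = μ (ψ ⁻¹' (ball (ψ y) r ∩ Set.range ψ)) := by
          rw [← mul_assoc, ← ENNReal.ofReal_mul (inv_nonneg.mpr hC.le),
            inv_mul_cancel₀ hC.ne', ENNReal.ofReal_one, one_mul]
  · -- upper bound
    have h1 : μ (ψ ⁻¹' (ball (ψ y) r ∩ Set.range ψ)) ≤ μ (π '' ball (ψ y) r) :=
      measure_mono (aux_sub π ψ hsecψ y r)
    have h2 : μ (π '' ball (ψ y) r) ≤ ENNReal.ofReal C * μ (π '' ball (φ y) r) :=
      hcomp _ _ hπeq.symm r hrr₀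
    have h3 : μ (π '' ball (φ y) r) ≤
        μ (φ ⁻¹' (ball (φ y) (L * (r + M)) ∩ Set.range φ)) := by
      refine measure_mono ((aux_sup π φ L M hL0 hsecφ hqiφ y r).trans ?_)
      apply Set.preimage_mono
      apply Set.inter_subset_inter_left
      apply ball_subset_ball
      nlinarith
    have h4 : μ (φ ⁻¹' (ball (φ y) (L * (r + M)) ∩ Set.range φ)) ≤
        ENNReal.ofReal (c₂ * (L * (r + M)) ^ Q) :=
      (hAD y (L * (r + M)) (by nlinarith)).2
    calc μ (ψ ⁻¹' (ball (ψ y) r ∩ Set.range ψ))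
        ≤ ENNReal.ofReal C * ENNReal.ofReal (c₂ * (L * (r + M)) ^ Q) :=
          h1.trans (h2.trans (mul_le_mul_right (h3.trans h4) _))
      _ = ENNReal.ofReal (c₂ * C * L ^ Q * (r + M) ^ Q) := by
          rw [← ENNReal.ofReal_mul hC.le,
            Real.mul_rpow hL0.le (by linarith)]
          ring_nf
end

section
/- Lower bound in the Ahlfors regularity transfer: under the comparability hypothesis μ(π(B(x,r))) ≤ C·μ(π(B(x',r))) for points in the same fiber, and assuming φ_*μ(B(φ(y), s) ∩ φ(Y)) ≥ c₁·s^Q for s > r₀, any intrinsically (L,M)-quasi-isometric section ψ with π(ψ(y)) = π(φ(y)) = y satisfies ψ_*μ(B(ψ(y), r) ∩ ψ(Y)) ≥ μ(π(B(ψ(y), (r−M)/L))) ≥ C⁻¹·μ(π(B(φ(y), (r−M)/L))) ≥ C⁻¹·φ_*μ(B(φ(y), (r−M)/L) ∩ φ(Y)) ≥ c₁·C⁻¹·L^{−Q}·(r−M)^Q whenever (r−M)/L > r₀. -/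
open Metric MeasureTheory

theorem stmt19 {X Y : Type*} [MetricSpace X] [TopologicalSpace Y]
    [MeasurableSpace Y] (μ : Measure Y)
    (π : X → Y) (φ ψ : Y → X)
    (L M C c₁ r₀ Q : ℝ)
    (hL : 1 ≤ L) (hM : 0 ≤ M) (hC : 0 < C) (hc₁ : 0 < c₁) (hr₀ : 0 < r₀) (hQ : 0 < Q)
    (hsecφ : ∀ y, π (φ y) = y) (hsecψ : ∀ y, π (ψ y) = y)
    (hcomp : ∀ x x' : X, π x = π x' → ∀ s > r₀,
      μ (π '' ball x s) ≤ ENNReal.ofReal C * μ (π '' ball x' s))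
    (hqiφ : ∀ y₁ y₂, dist (φ y₁) (φ y₂) ≤ L * infDist (φ y₁) (π ⁻¹' {y₂}) + M)
    (hqiψ : ∀ y₁ y₂, dist (ψ y₁) (ψ y₂) ≤ L * infDist (ψ y₁) (π ⁻¹' {y₂}) + M)
    (hAD : ∀ (y : Y), ∀ s > r₀,
      ENNReal.ofReal (c₁ * s ^ Q) ≤ μ (φ ⁻¹' (ball (φ y) s ∩ Set.range φ)))
    (y : Y) (r : ℝ) (hr : (r - M) / L > r₀) :
    μ (π '' ball (ψ y) ((r - M) / L)) ≤ μ (ψ ⁻¹' (ball (ψ y) r ∩ Set.range ψ)) ∧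
      ENNReal.ofReal C⁻¹ * μ (π '' ball (φ y) ((r - M) / L)) ≤
        μ (π '' ball (ψ y) ((r - M) / L)) ∧
      μ (φ ⁻¹' (ball (φ y) ((r - M) / L) ∩ Set.range φ)) ≤
        μ (π '' ball (φ y) ((r - M) / L)) ∧
      ENNReal.ofReal (c₁ * C⁻¹ * L ^ (-Q) * (r - M) ^ Q) ≤
        μ (ψ ⁻¹' (ball (ψ y) r ∩ Set.range ψ)) := by
  set s := (r - M) / L with hs
  have hL0 : (0:ℝ) < L := lt_of_lt_of_le one_pos hL
  have hs0 : 0 < s := lt_trans hr₀ hr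
  have hLs : L * s = r - M := by
    rw [hs, mul_div_cancel₀ _ hL0.ne']
  have hrM : 0 < r - M := by rw [← hLs]; exact mul_pos hL0 hs0
  -- Part 1
  have h1sub : π '' ball (ψ y) s ⊆ ψ ⁻¹' (ball (ψ y) r ∩ Set.range ψ) := by
    rintro z ⟨x, hx, rfl⟩
    refine ⟨?_, Set.mem_range_self _⟩
    rw [mem_ball, dist_comm]
    calc dist (ψ y) (ψ (π x)) ≤ L * infDist (ψ y) (π ⁻¹' {π x}) + M := hqiψ y (π x)
      _ ≤ L * dist (ψ y) x + M := by
          gcongr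
          exact infDist_le_dist_of_mem rfl
      _ < L * s + M := by
          have : dist (ψ y) x < s := by rw [dist_comm]; exact mem_ball.mp hx
          nlinarith
      _ = r := by rw [hLs]; ring
  have h1 : μ (π '' ball (ψ y) s) ≤ μ (ψ ⁻¹' (ball (ψ y) r ∩ Set.range ψ)) :=
    measure_mono h1sub
  -- Part 2
  have h2raw := hcomp (φ y) (ψ y) (by rw [hsecφ, hsecψ]) s hr
  have h2 : ENNReal.ofReal C⁻¹ * μ (π '' ball (φ y) s) ≤ μ (π '' ball (ψ y) s) := by
    calc ENNReal.ofReal C⁻¹ * μ (π '' ball (φ y) s)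
        ≤ ENNReal.ofReal C⁻¹ * (ENNReal.ofReal C * μ (π '' ball (ψ y) s)) :=
          mul_le_mul_right h2raw _
      _ = (ENNReal.ofReal C⁻¹ * ENNReal.ofReal C) * μ (π '' ball (ψ y) s) := by ring
      _ = μ (π '' ball (ψ y) s) := by
          rw [← ENNReal.ofReal_mul (inv_nonneg.mpr hC.le), inv_mul_cancel₀ hC.ne',
            ENNReal.ofReal_one, one_mul]
  -- Part 3
  have h3sub : φ ⁻¹' (ball (φ y) s ∩ Set.range φ) ⊆ π '' ball (φ y) s := by
    intro z hz
    exact ⟨φ z, hz.1, hsecφ z⟩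
  have h3 : μ (φ ⁻¹' (ball (φ y) s ∩ Set.range φ)) ≤ μ (π '' ball (φ y) s) :=
    measure_mono h3sub
  -- Part 4
  have hpow : c₁ * C⁻¹ * L ^ (-Q) * (r - M) ^ Q = C⁻¹ * (c₁ * s ^ Q) := by
    rw [hs, Real.div_rpow hrM.le hL0.le, Real.rpow_neg hL0.le]
    field_simp
  have h4 : ENNReal.ofReal (c₁ * C⁻¹ * L ^ (-Q) * (r - M) ^ Q) ≤
      μ (ψ ⁻¹' (ball (ψ y) r ∩ Set.range ψ)) := by
    calc ENNReal.ofReal (c₁ * C⁻¹ * L ^ (-Q) * (r - M) ^ Q)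
        = ENNReal.ofReal C⁻¹ * ENNReal.ofReal (c₁ * s ^ Q) := by
          rw [hpow, ENNReal.ofReal_mul (inv_nonneg.mpr hC.le)]
      _ ≤ ENNReal.ofReal C⁻¹ * μ (φ ⁻¹' (ball (φ y) s ∩ Set.range φ)) :=
          mul_le_mul_right (hAD y s hr) _
      _ ≤ ENNReal.ofReal C⁻¹ * μ (π '' ball (φ y) s) := mul_le_mul_right h3 _
      _ ≤ μ (π '' ball (ψ y) s) := h2
      _ ≤ μ (ψ ⁻¹' (ball (ψ y) r ∩ Set.range ψ)) := h1
  exact ⟨h1, h2, h3, h4⟩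
end
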